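/- arXiv:1201.3273 — 6 statements merged into one kernel-verified Lean document; each statement's English description precedes it below -/
import Mathlib

section
/- Let G be a finite simple graph that admits a perfect elimination ordering (i.e., G is chordal) and let λ and C be positive integers. If G has a [λ,C]-partition then G has a [λ,C]-coloring. -/
/-- Reachability inside a set `S`: there is a walk from `u` to `v` all of whose
vertices lie in `S`. -/
def ReachIn {V : Type*} (G : SimpleGraph V) (S : Set V) (u v : V) : Prop :=
  Relation.ReflTransGen (fun a b => G.Adj a b ∧ a ∈ S ∧ b ∈ S) u v

/-- The subgraph induced by `S` is connected. -/
def ConnectedIn {V : Type*} (G : SimpleGraph V) (S : Set V) : Prop :=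
  ∀ u ∈ S, ∀ v ∈ S, ReachIn G S u v

/-- A `[λ,C]`-coloring of `G` with colors `Fin L`: every monochromatic component
(connected component of the subgraph induced by a color class) has at most `C`
vertices. -/
def IsLCColoring {V : Type*} (G : SimpleGraph V) (C : ℕ) {L : ℕ} (c : V → Fin L) : Prop :=
  ∀ v : V, {u | ReachIn G {w | c w = c v} v u}.ncard ≤ C

/-- A `[λ,C]`-partition of `G`: a partition of the vertex set such that every part
induces a connected subgraph, every part has at most `C` vertices, and every
clique of `G` meets at most `L` parts. -/
def IsLCPartition {V : Type*} (G : SimpleGraph V) (L C : ℕ) (Ps : Set (Set V)) : Prop :=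
  (∀ P ∈ Ps, P.Nonempty) ∧ Ps.PairwiseDisjoint id ∧ ⋃₀ Ps = Set.univ ∧
    (∀ P ∈ Ps, ConnectedIn G P ∧ P.ncard ≤ C) ∧
    ∀ K : Set V, G.IsClique K → {P ∈ Ps | (P ∩ K).Nonempty}.ncard ≤ L

/-- `G` has a perfect elimination ordering: a linear ordering of its vertices such
that the later neighbors of each vertex form a clique. -/
def HasPEO {V : Type*} [Fintype V] (G : SimpleGraph V) : Prop :=
  ∃ e : Fin (Fintype.card V) ≃ V,
    ∀ i : Fin (Fintype.card V),
      G.IsClique {w : V | ∃ j : Fin (Fintype.card V), i < j ∧ w = e j ∧ G.Adj (e i) (e j)}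

/-!
Colour the parts rather than the vertices: if parts joined by an edge get different colours,
every monochromatic component stays inside one part and so has at most `C` vertices. Such a
colouring of the parts is built by induction along the elimination ordering. Remove a simplicial
vertex `v`; its part stays connected, since any two neighbours of `v` are adjacent. If `v` is not
alone in its part, it has a neighbour `b₀` in that part, and every part touching `v` also touches
`b₀`, so the colouring of the smaller graph still works. If `v` forms a part by itself, the closed
neighbourhood of `v` is a clique meeting at most `λ` parts, so the parts touching `v` use at most
`λ - 1` colours and a free colour remains for `{v}`.
-/

section

variable {V ι α : Type*} {G : SimpleGraph V}

lemma ReachIn.apply_eq {S : Set V} {u w : V} {q : V → α}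
    (hq : ∀ a ∈ S, ∀ b ∈ S, G.Adj a b → q a = q b) (h : ReachIn G S u w) : q w = q u := by
  induction h with
  | refl => rfl
  | tail _ hstep ih => exact (hq _ hstep.2.1 _ hstep.2.2 hstep.1).symm.trans ih

/-- A walk through `v` is shortcut between the two neighbours of `v` it visits. -/
lemma ReachIn.exists_reachIn_diff_singleton {P : Set V} {u v w : V}
    (hv : G.IsClique (G.neighborSet v ∩ P)) (hu : u ∈ P \ {v}) (h : ReachIn G P u w) :
    ∃ b ∈ P \ {v}, ReachIn G (P \ {v}) u b ∧ (b = w ∨ w = v ∧ G.Adj v b) := by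
  induction h with
  | refl => exact ⟨u, hu, Relation.ReflTransGen.refl, Or.inl rfl⟩
  | @tail x y _ hxy ih =>
    obtain ⟨hadj, -, hyP⟩ := hxy
    obtain ⟨b, hb, hub, rfl | ⟨rfl, hvb⟩⟩ := ih
    · by_cases hyv : y = v
      · exact ⟨b, hb, hub, Or.inr ⟨hyv, hyv ▸ hadj.symm⟩⟩
      · exact ⟨y, ⟨hyP, hyv⟩, Relation.ReflTransGen.tail hub ⟨hadj, hb, hyP, hyv⟩, Or.inl rfl⟩
    · by_cases hby : b = y
      · exact ⟨b, hb, hub, Or.inl hby⟩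
      · have hyv : y ≠ x := (G.ne_of_adj hadj).symm
        exact ⟨y, ⟨hyP, hyv⟩, Relation.ReflTransGen.tail hub
          ⟨hv ⟨hvb, hb.1⟩ ⟨hadj, hyP⟩ hby, hb, hyP, hyv⟩, Or.inl rfl⟩

lemma ConnectedIn.diff_singleton {P : Set V} {v : V} (hP : ConnectedIn G P)
    (hv : G.IsClique (G.neighborSet v ∩ P)) : ConnectedIn G (P \ {v}) := by
  intro u hu w hw
  obtain ⟨b, -, hub, rfl | ⟨hwv, -⟩⟩ := (hP u hu.1 w hw.1).exists_reachIn_diff_singleton hv hu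
  · exact hub
  · exact absurd hwv hw.2

lemma ConnectedIn.exists_adj {P : Set V} (hP : ConnectedIn G P) {u v : V} (hu : u ∈ P)
    (hv : v ∈ P) (huv : u ≠ v) : ∃ b ∈ P, G.Adj u b := by
  rcases Relation.ReflTransGen.cases_head (hP u hu v hv) with rfl | ⟨b, ⟨hadj, -, hb⟩, -⟩
  · exact absurd rfl huv
  · exact ⟨b, hb, hadj⟩

lemma HasPEO.exists_isClique_neighborSet_inter [Fintype V] (h : HasPEO G) (S : Finset V)
    (hS : S.Nonempty) : ∃ v ∈ S, G.IsClique (G.neighborSet v ∩ S) := by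
  obtain ⟨e, he⟩ := h
  obtain ⟨v, hvS, hmin⟩ := S.exists_min_image e.symm hS
  refine ⟨v, hvS, (he (e.symm v)).subset ?_⟩
  rintro w ⟨hvw, hwS⟩
  refine ⟨e.symm w, lt_of_le_of_ne (hmin w hwS) ?_, (e.apply_symm_apply w).symm, by simpa using hvw⟩
  exact fun h => G.ne_of_adj hvw (e.symm.injective h)

/-- A proper colouring of the graph obtained from `G[S]` by contracting each part `p⁻¹ {i}`. -/
def IsPartColoringOn (G : SimpleGraph V) (S : Set V) (p : V → ι) (f : ι → α) : Prop :=
  ∀ a ∈ S, ∀ b ∈ S, G.Adj a b → p a ≠ p b → f (p a) ≠ f (p b)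

namespace IsPartColoringOn

variable {S : Set V} {p : V → ι} {f : ι → α} {v : V}

lemma of_diff_singleton (hf : IsPartColoringOn G (S \ {v}) p f)
    (hv : ∀ b ∈ S, G.Adj v b → p v ≠ p b → f (p v) ≠ f (p b)) : IsPartColoringOn G S p f := by
  intro a ha b hb hab hpab
  by_cases hav : a = v
  · subst hav
    exact hv b hb hab hpab
  by_cases hbv : b = v
  · subst hbv
    exact (hv a ha hab.symm hpab.symm).symm
  exact hf a ⟨ha, hav⟩ b ⟨hb, hbv⟩ hab hpab

lemma of_diff_singleton_of_connectedIn (hf : IsPartColoringOn G (S \ {v}) p f)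
    (hv : G.IsClique (G.neighborSet v ∩ S)) (hvS : v ∈ S)
    (hconn : ConnectedIn G {w | w ∈ S ∧ p w = p v}) (hshared : ∃ w ∈ S, w ≠ v ∧ p w = p v) :
    IsPartColoringOn G S p f := by
  refine hf.of_diff_singleton fun b hb hvb hpb => ?_
  obtain ⟨w, hwS, hwv, hpw⟩ := hshared
  obtain ⟨b₀, ⟨hb₀S, hpb₀⟩, hvb₀⟩ := hconn.exists_adj ⟨hvS, rfl⟩ ⟨hwS, hpw⟩ hwv.symm
  have hb₀b : b₀ ≠ b := by
    rintro rfl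
    exact hpb hpb₀.symm
  rw [← hpb₀] at hpb ⊢
  exact hf b₀ ⟨hb₀S, (G.ne_of_adj hvb₀).symm⟩ b ⟨hb, (G.ne_of_adj hvb).symm⟩
    (hv ⟨hvb₀, hb₀S⟩ ⟨hvb, hb⟩ hb₀b) hpb

lemma update_of_diff_singleton [DecidableEq ι] (hf : IsPartColoringOn G (S \ {v}) p f)
    (halone : ∀ w ∈ S, p w = p v → w = v) {c : α} (hc : ∀ b ∈ S, G.Adj v b → f (p b) ≠ c) :
    IsPartColoringOn G S p (Function.update f (p v) c) := by
  have hne : ∀ w ∈ S \ {v}, p w ≠ p v := fun w hw hpw => hw.2 (halone w hw.1 hpw)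
  refine of_diff_singleton (v := v) (fun a ha b hb hab hpab => ?_) fun b hb hvb hpb => ?_
  · rw [Function.update_of_ne (hne a ha), Function.update_of_ne (hne b hb)]
    exact hf a ha b hb hab hpab
  · rw [Function.update_self, Function.update_of_ne hpb.symm]
    exact (hc b hb hvb).symm

end IsPartColoringOn

lemma ncard_image_neighborSet_inter_lt {S : Set V} [Finite S] {p : V → ι} {L : ℕ}
    (hclique : ∀ K ⊆ S, G.IsClique K → (p '' K).ncard ≤ L) {v : V} (hvS : v ∈ S)
    (hv : G.IsClique (G.neighborSet v ∩ S)) (halone : ∀ w ∈ S, p w = p v → w = v) :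
    (p '' (G.neighborSet v ∩ S)).ncard < L := by
  have hK := hclique _ (Set.insert_subset hvS Set.inter_subset_right)
    (hv.insert fun b hb _ => hb.1)
  have hpv : p v ∉ p '' (G.neighborSet v ∩ S) := by
    rintro ⟨w, ⟨hvw, hwS⟩, hpw⟩
    exact G.ne_of_adj hvw (halone w hwS hpw).symm
  rw [Set.image_insert_eq, Set.ncard_insert_of_notMem hpv] at hK
  omega

lemma Fin.exists_notMem_of_ncard_lt {L : ℕ} {s : Set (Fin L)} (hs : s.ncard < L) :
    ∃ c, c ∉ s := by
  by_contra! h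
  rw [Set.eq_univ_of_forall h, Set.ncard_univ, Nat.card_eq_fintype_card, Fintype.card_fin] at hs
  exact lt_irrefl L hs

theorem exists_isPartColoringOn {L : ℕ} (hL : 0 < L) (p : V → ι)
    (hsimp : ∀ S : Finset V, S.Nonempty → ∃ v ∈ S, G.IsClique (G.neighborSet v ∩ S))
    (S : Finset V) (hconn : ∀ v ∈ S, ConnectedIn G {w | w ∈ S ∧ p w = p v})
    (hclique : ∀ K ⊆ (S : Set V), G.IsClique K → (p '' K).ncard ≤ L) :
    ∃ f : ι → Fin L, IsPartColoringOn G S p f := by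
  classical
  induction S using Finset.strongInduction with
  | H S ih =>
  rcases S.eq_empty_or_nonempty with rfl | hS
  · exact ⟨fun _ => ⟨0, hL⟩, by simp [IsPartColoringOn]⟩
  obtain ⟨v, hvS, hv⟩ := hsimp S hS
  have hconn' : ∀ u ∈ S.erase v, ConnectedIn G {w | w ∈ S.erase v ∧ p w = p u} := by
    intro u hu
    have hpart := (hconn u (Finset.mem_of_mem_erase hu)).diff_singleton
      (hv.subset (Set.inter_subset_inter_right _ fun w hw => hw.1))
    convert hpart using 1
    ext w
    simp only [Finset.mem_erase, Set.mem_ofPred_eq, Set.mem_sdiff, Set.mem_singleton_iff]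
    tauto
  obtain ⟨f, hf⟩ := ih (S.erase v) (S.erase_ssubset hvS) hconn'
    fun K hK => hclique K (hK.trans (by simp))
  rw [Finset.coe_erase] at hf
  by_cases hshared : ∃ w ∈ S, w ≠ v ∧ p w = p v
  · exact ⟨f, hf.of_diff_singleton_of_connectedIn hv hvS (hconn v hvS) hshared⟩
  push Not at hshared
  have halone : ∀ w ∈ (S : Set V), p w = p v → w = v := fun w hw => not_imp_not.mp (hshared w hw)
  obtain ⟨c, hc⟩ := Fin.exists_notMem_of_ncard_lt
    ((Set.ncard_image_le (Set.toFinite _)).trans_lt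
      (ncard_image_neighborSet_inter_lt hclique hvS hv halone))
  exact ⟨_, hf.update_of_diff_singleton halone fun b hb hvb hfb =>
    hc ⟨p b, ⟨b, ⟨hvb, hb⟩, rfl⟩, hfb⟩⟩

end

theorem partition_to_coloring_general {V : Type*} [Fintype V] (G : SimpleGraph V)
    (L C : ℕ) (hL : 0 < L) (hchordal : HasPEO G)
    (h : ∃ Ps : Set (Set V), IsLCPartition G L C Ps) :
    ∃ c : V → Fin L, IsLCColoring G C c := by
  obtain ⟨Ps, -, hdisj, hcover, hparts, hclique⟩ := h
  choose part hpartPs hmem using fun v => Set.mem_sUnion.mp (hcover ▸ Set.mem_univ v)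
  have hpart_eq : ∀ v, {w | part w = part v} = part v := fun v => Set.ext fun w =>
    ⟨fun hw => hw ▸ hmem w, fun hw => hdisj.elim_set (hpartPs w) (hpartPs v) w (hmem w) hw⟩
  have himage : ∀ K : Set V, part '' K ⊆ {P ∈ Ps | (P ∩ K).Nonempty} := by
    rintro K _ ⟨k, hk, rfl⟩
    exact ⟨hpartPs k, k, hmem k, hk⟩
  obtain ⟨f, hf⟩ := exists_isPartColoringOn hL part hchordal.exists_isClique_neighborSet_inter
    Finset.univ (fun v _ => by simpa [hpart_eq] using (hparts _ (hpartPs v)).1)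
    fun K _ hK => (Set.ncard_le_ncard (himage K)).trans (hclique K hK)
  rw [Finset.coe_univ] at hf
  refine ⟨f ∘ part, fun v => ?_⟩
  have hcomp : {u | ReachIn G {w | f (part w) = f (part v)} v u} ⊆ part v := fun u hu =>
    hpart_eq v ▸ ReachIn.apply_eq (fun a ha b hb hab => by_contra fun hne =>
      hf a trivial b trivial hab hne (ha.trans hb.symm)) hu
  exact (Set.ncard_le_ncard hcomp).trans (hparts _ (hpartPs v)).2

/-- if a finite chordal graph (a graph with a perfect elimination
ordering) has a `[λ,C]`-partition then it has a `[λ,C]`-coloring. -/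
theorem partition_to_coloring {V : Type*} [Fintype V] (G : SimpleGraph V)
    (L C : ℕ) (hL : 0 < L) (hC : 0 < C) (hchordal : HasPEO G)
    (h : ∃ Ps : Set (Set V), IsLCPartition G L C Ps) :
    ∃ c : V → Fin L, IsLCColoring G C c :=
  partition_to_coloring_general G L C hL hchordal h
end

section
/- Let n and C be positive integers with C ≤ n, let λ be a real number, and let x₁,…,xₙ ∈ [0,1] be real numbers. Define y₀ = 0, y_j = x₁ + ⋯ + x_j for 1 ≤ j ≤ n, and define x̄_j = 1 if ⌈y_{j−1}⌉ ≠ ⌈y_j⌉ and x̄_j = 0 otherwise. Then: (i) for every j with x_j = 1 we have x̄_j = 1; (ii) for every i with 1 ≤ i ≤ n−C+1 such that x_i + x_{i+1} + ⋯ + x_{i+C−1} ≥ 1, there exists k with i ≤ k ≤ i+C−1 and x̄_k = 1; (iii) for all 1 ≤ a ≤ b ≤ n such that x_a + x_{a+1} + ⋯ + x_b ≤ λ − 1, the number of indices j with a ≤ j ≤ b and x̄_j = 1 is at most ⌈λ⌉ − 1. In particular, every feasible fractional solution of the LP relaxation of the block-partition integer program can be rounded to a feasible integer solution with objective value at most ⌈λ⌉.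 -/
/-!
The ceilings `⌈y_j⌉` of the prefix sums form a nondecreasing integer sequence, and `x̄` marks
the indices where it increases. An increase of `y` by at least `1` over a range forces the
ceiling to increase somewhere in that range, which gives (i) and (ii). Over `[a, b]` the
number of increases is at most the total increase `⌈y_b⌉ - ⌈y_{a-1}⌉`, and `⌈y_b⌉ ≤
⌈y_{a-1}⌉ + ⌈λ - 1⌉` when `y_b - y_{a-1} ≤ λ - 1`, which gives (iii).
-/

open Finset

theorem Nat.Icc_eq_Ioc_sub_one {a : ℕ} (ha : 1 ≤ a) (b : ℕ) : Icc a b = Ioc (a - 1) b := by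
  rw [← Icc_add_one_left_eq_Ioc, Nat.sub_add_cancel ha]

section Telescoping

variable {m b : ℕ}

theorem Finset.sum_Ioc_eq_sum_Icc_one_sub {M : Type*} [AddCommGroup M] (f : ℕ → M)
    (hmb : m ≤ b) : ∑ j ∈ Ioc m b, f j = ∑ i ∈ Icc 1 b, f i - ∑ i ∈ Icc 1 m, f i := by
  rw [eq_sub_iff_add_eq', Nat.Icc_eq_Ioc_sub_one le_rfl, Nat.Icc_eq_Ioc_sub_one le_rfl]
  exact sum_Ioc_consecutive f (Nat.zero_le m) hmb

theorem Finset.sum_Ioc_sub_pred {M : Type*} [AddCommGroup M] (f : ℕ → M)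
    (hmb : m ≤ b) : ∑ j ∈ Ioc m b, (f j - f (j - 1)) = f b - f m := by
  induction b, hmb using Nat.le_induction with
  | base => simp
  | succ b hmb ih =>
    rw [sum_Ioc_succ_top hmb, ih, Nat.add_sub_cancel]
    abel

variable (f : ℕ → ℤ)

theorem eq_of_forall_mem_Ioc_pred_eq (hmb : m ≤ b) (h : ∀ j ∈ Ioc m b, f (j - 1) = f j) :
    f m = f b := by
  have := sum_Ioc_sub_pred f hmb
  rw [sum_eq_zero fun j hj => sub_eq_zero.2 (h j hj).symm] at this
  omega

theorem card_filter_pred_ne_le (hmb : m ≤ b) (h : ∀ j ∈ Ioc m b, f (j - 1) ≤ f j) :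
    (#{j ∈ Ioc m b | f (j - 1) ≠ f j} : ℤ) ≤ f b - f m := by
  rw [natCast_card_filter, ← sum_Ioc_sub_pred f hmb]
  refine sum_le_sum fun j hj => ?_
  have := h j hj
  split_ifs <;> omega

end Telescoping

section Ceil

variable {α : Type*} [Ring α] [LinearOrder α] [IsStrictOrderedRing α] [FloorRing α]

theorem Int.ceil_lt_ceil_of_add_one_le {a b : α} (h : a + 1 ≤ b) : ⌈a⌉ < ⌈b⌉ := by
  have := Int.ceil_le_ceil h
  rw [Int.ceil_add_one] at this
  omega

theorem Int.ceil_sub_ceil_le_ceil_sub_one {a b c : α} (h : b - a ≤ c - 1) :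
    ⌈b⌉ - ⌈a⌉ ≤ ⌈c⌉ - 1 := by
  have := (Int.ceil_le_ceil (sub_le_iff_le_add'.1 h)).trans (Int.ceil_add_le a (c - 1))
  rw [Int.ceil_sub_one] at this
  omega

variable (y : ℕ → α) {m b : ℕ}

theorem exists_mem_Ioc_ceil_pred_ne (hmb : m ≤ b) (h : y m + 1 ≤ y b) :
    ∃ j ∈ Ioc m b, ⌈y (j - 1)⌉ ≠ ⌈y j⌉ := by
  by_contra! hconst
  exact (Int.ceil_lt_ceil_of_add_one_le h).ne
    (eq_of_forall_mem_Ioc_pred_eq (fun j => ⌈y j⌉) hmb hconst)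

theorem card_filter_ceil_pred_ne_le {c : α} (hmb : m ≤ b)
    (hmono : ∀ j ∈ Ioc m b, y (j - 1) ≤ y j) (h : y b - y m ≤ c - 1) :
    (#{j ∈ Ioc m b | ⌈y (j - 1)⌉ ≠ ⌈y j⌉} : ℤ) ≤ ⌈c⌉ - 1 :=
  (card_filter_pred_ne_le (fun j => ⌈y j⌉) hmb fun j hj => Int.ceil_le_ceil (hmono j hj)).trans
    (Int.ceil_sub_ceil_le_ceil_sub_one h)

end Ceil

theorem lp_rounding_general (n C : ℕ)
    (lam : ℝ) (x : ℕ → ℝ) (hx : ∀ j ∈ Finset.Icc 1 n, x j ∈ Set.Icc (0 : ℝ) 1) :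
    let y : ℕ → ℝ := fun j => ∑ i ∈ Finset.Icc 1 j, x i
    let xbar : ℕ → ℕ := fun j => if ⌈y (j - 1)⌉ ≠ ⌈y j⌉ then 1 else 0
    (∀ j ∈ Finset.Icc 1 n, x j = 1 → xbar j = 1) ∧
    (∀ i : ℕ, 1 ≤ i → i ≤ n - C + 1 →
      1 ≤ ∑ j ∈ Finset.Icc i (i + C - 1), x j →
      ∃ k ∈ Finset.Icc i (i + C - 1), xbar k = 1) ∧
    (∀ a b : ℕ, 1 ≤ a → a ≤ b → b ≤ n →
      (∑ j ∈ Finset.Icc a b, x j) ≤ lam - 1 →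
      (((Finset.Icc a b).filter fun j => xbar j = 1).card : ℤ) ≤ ⌈lam⌉ - 1) := by
  intro y xbar
  have hxbar (j : ℕ) : xbar j = 1 ↔ ⌈y (j - 1)⌉ ≠ ⌈y j⌉ := by
    simp only [xbar]; split_ifs <;> simp_all
  have hy {m b : ℕ} (hmb : m ≤ b) : ∑ j ∈ Ioc m b, x j = y b - y m :=
    sum_Ioc_eq_sum_Icc_one_sub x hmb
  have hstep {j : ℕ} (hj : 1 ≤ j) : y j = y (j - 1) + x j := by
    have := hy (Nat.sub_le j 1)
    rw [← Nat.Icc_eq_Ioc_sub_one hj, Icc_self, sum_singleton] at this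
    linarith
  refine ⟨fun j hj hxj => ?_, fun i hi _ hsum => ?_, fun a b ha hab hbn hsum => ?_⟩
  · refine (hxbar j).2 (Int.ceil_lt_ceil_of_add_one_le ?_).ne
    rw [hstep (mem_Icc.1 hj).1, hxj]
  · rw [Nat.Icc_eq_Ioc_sub_one hi] at hsum ⊢
    have hle := (nonempty_Ioc.1 (nonempty_of_sum_ne_zero (by linarith : _ ≠ (0 : ℝ)))).le
    obtain ⟨k, hk, hne⟩ := exists_mem_Ioc_ceil_pred_ne y hle (by linarith [hy hle])
    exact ⟨k, hk, (hxbar k).2 hne⟩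
  · rw [Nat.Icc_eq_Ioc_sub_one ha, hy (by omega)] at hsum
    rw [Nat.Icc_eq_Ioc_sub_one ha, filter_congr fun j _ => hxbar j]
    refine card_filter_ceil_pred_ne_le y (by omega) (fun j hj => ?_) hsum
    obtain ⟨hj1, hjb⟩ := mem_Ioc.1 hj
    rw [hstep (by omega : 1 ≤ j)]
    linarith [(hx j (mem_Icc.2 ⟨by omega, by omega⟩)).1]

/-- the rounding scheme for the LP relaxation of the block-partition
integer program.  With `y_j = x_1 + ⋯ + x_j` and `x̄_j = 1` iff `⌈y_{j-1}⌉ ≠ ⌈y_j⌉`: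
(i) `x_j = 1` forces `x̄_j = 1`; (ii) any `C` consecutive variables summing to at
least `1` contain an index with `x̄ = 1`; (iii) any consecutive range summing to at
most `λ - 1` contains at most `⌈λ⌉ - 1` indices with `x̄ = 1`. -/
theorem lp_rounding (n C : ℕ) (hn : 0 < n) (hC : 0 < C) (hCn : C ≤ n)
    (lam : ℝ) (x : ℕ → ℝ) (hx : ∀ j ∈ Finset.Icc 1 n, x j ∈ Set.Icc (0 : ℝ) 1) :
    let y : ℕ → ℝ := fun j => ∑ i ∈ Finset.Icc 1 j, x i
    let xbar : ℕ → ℕ := fun j => if ⌈y (j - 1)⌉ ≠ ⌈y j⌉ then 1 else 0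
    (∀ j ∈ Finset.Icc 1 n, x j = 1 → xbar j = 1) ∧
    (∀ i : ℕ, 1 ≤ i → i ≤ n - C + 1 →
      1 ≤ ∑ j ∈ Finset.Icc i (i + C - 1), x j →
      ∃ k ∈ Finset.Icc i (i + C - 1), xbar k = 1) ∧
    (∀ a b : ℕ, 1 ≤ a → a ≤ b → b ≤ n →
      (∑ j ∈ Finset.Icc a b, x j) ≤ lam - 1 →
      (((Finset.Icc a b).filter fun j => xbar j = 1).card : ℤ) ≤ ⌈lam⌉ - 1) :=
  lp_rounding_general n C lam x hx
end

section
/- Let G be a finite simple graph with positive integer vertex weights W, and let λ and C be positive integers. Then G is [λ,C]-split colorable if and only if the weight-expanded graph WXP(G) has a [λ,C]-coloring in the unweighted sense (every monochromatic component has at most C vertices). -/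
/-- The graph whose vertices are `m v` copies of each vertex `v` of `G`, two
distinct copies being adjacent iff they are copies of the same vertex of `G` or
copies of adjacent vertices of `G`.  With `m = W` this is the weight-expanded
graph `WXP(G)`, and together with any choice of positive weights summing
correctly it describes an arbitrary weight-split graph of `G`. -/
def copyGraph {V : Type*} (G : SimpleGraph V) (m : V → ℕ) :
    SimpleGraph (Σ v : V, Fin (m v)) where
  Adj a b := (a.1 = b.1 ∧ a ≠ b) ∨ G.Adj a.1 b.1
  symm := by
    constructor
    rintro a b (⟨h1, h2⟩ | h)
    · exact Or.inl ⟨h1.symm, h2.symm⟩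
    · exact Or.inr h.symm
  loopless := by
    constructor
    rintro a (⟨_, h⟩ | h)
    · exact h rfl
    · exact G.loopless.irrefl _ h

/-- `G` with weights `Wt` is `[λ,C]`-split colorable: some weight-split graph of
`G` (given by multiplicities `m`, positive copy weights `W'` summing to the
original weights) admits a coloring with `L` colors in which every monochromatic
component has total weight at most `C`. -/
def IsSplitColorable {V : Type*} (G : SimpleGraph V) (Wt : V → ℕ) (L C : ℕ) : Prop :=
  ∃ m : V → ℕ, (∀ v, 0 < m v) ∧
    ∃ W' : (Σ v : V, Fin (m v)) → ℕ,
      (∀ x, 0 < W' x) ∧ (∀ v : V, ∑ t : Fin (m v), W' ⟨v, t⟩ = Wt v) ∧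
      ∃ c : (Σ v : V, Fin (m v)) → Fin L,
        ∀ x, (∑ᶠ u ∈ {u | ReachIn (copyGraph G m) {w | c w = c x} x u}, W' u) ≤ C

/-! A weight-split graph with copies `⟨v, t⟩` of weight `W' ⟨v, t⟩` is a quotient of `WXP(G)`:
group the `Wt v` copies of `v` into consecutive blocks of sizes `W' ⟨v, t⟩`. The quotient map
sends edges to edges or collapses them, so pulling a coloring back along it puts each
monochromatic component of `WXP(G)` inside the preimage of one of the split graph, and that
preimage has exactly as many vertices as the component has weight. Conversely, `WXP(G)` with
unit weights is itself a weight-split graph. -/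

theorem ReachIn.map {A B : Type*} {G : SimpleGraph A} {H : SimpleGraph B} {ψ : A → B}
    (hψ : ∀ a b, G.Adj a b → ψ a = ψ b ∨ H.Adj (ψ a) (ψ b)) {T : Set B} {x u : A}
    (h : ReachIn G (ψ ⁻¹' T) x u) : ReachIn H T (ψ x) (ψ u) := by
  induction h with
  | refl => exact .refl
  | tail _ hstep ih =>
    obtain ⟨hadj, ha, hb⟩ := hstep
    rcases hψ _ _ hadj with heq | hadj'
    · exact heq ▸ ih
    · exact ih.tail ⟨hadj', ha, hb⟩

theorem copyGraph_adj_map {V : Type*} (G : SimpleGraph V) {m n : V → ℕ}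
    {ψ : (Σ v, Fin (m v)) → Σ v, Fin (n v)} (hψ : ∀ x, (ψ x).1 = x.1) {a b : Σ v, Fin (m v)}
    (h : (copyGraph G m).Adj a b) : ψ a = ψ b ∨ (copyGraph G n).Adj (ψ a) (ψ b) := by
  by_cases hab : ψ a = ψ b
  · exact .inl hab
  · right
    rcases h with ⟨hfst, -⟩ | hG
    · exact .inl ⟨by rw [hψ, hψ, hfst], hab⟩
    · exact .inr (by rwa [hψ, hψ])

theorem Set.ncard_preimage_eq_finsum_ncard_fiber {A B : Type*} [Finite A] (ψ : A → B)
    {S : Set B} (hS : S.Finite := by toFinite_tac) :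
    (ψ ⁻¹' S).ncard = ∑ᶠ y ∈ S, (ψ ⁻¹' {y}).ncard := by
  rw [← hS.ncard_biUnion (fun _ _ => toFinite _)]
  · rw [← Set.preimage_iUnion₂, Set.biUnion_of_singleton]
  · exact fun y _ y' _ hne => Set.disjoint_singleton.mpr hne |>.preimage ψ

theorem Sigma.ncard_preimage_fst_singleton {ι : Type*} {β : ι → Type*} (i : ι) :
    (Sigma.fst ⁻¹' {i} : Set (Σ i, β i)).ncard = Nat.card (β i) := by
  rw [← Set.range_sigmaMk, ← Set.image_univ, Set.ncard_image_of_injective _ sigma_mk_injective,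
    Set.ncard_univ]

section Split

variable {V : Type*} {Wt m : V → ℕ} {W' : (Σ v, Fin (m v)) → ℕ}

def splitEquiv (hsum : ∀ v, ∑ t : Fin (m v), W' ⟨v, t⟩ = Wt v) :
    (Σ v, Fin (Wt v)) ≃ Σ y : (Σ v, Fin (m v)), Fin (W' y) :=
  (Equiv.sigmaCongrRight fun v => (finCongr (hsum v).symm).trans finSigmaFinEquiv.symm).trans
    (Equiv.sigmaAssoc fun v t => Fin (W' ⟨v, t⟩)).symm

theorem splitEquiv_fst_fst (hsum : ∀ v, ∑ t : Fin (m v), W' ⟨v, t⟩ = Wt v)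
    (x : Σ v, Fin (Wt v)) : (splitEquiv hsum x).1.1 = x.1 :=
  rfl

theorem ncard_preimage_splitEquiv_fst [Finite V] (hsum : ∀ v, ∑ t : Fin (m v), W' ⟨v, t⟩ = Wt v)
    (S : Set (Σ v, Fin (m v))) :
    (Sigma.fst ∘ splitEquiv hsum ⁻¹' S).ncard = ∑ᶠ y ∈ S, W' y := by
  rw [Set.ncard_preimage_eq_finsum_ncard_fiber]
  refine finsum_mem_congr rfl fun y _ => ?_
  rw [Set.preimage_comp, Set.ncard_preimage_of_injective_subset_range (splitEquiv hsum).injective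
    (by simp), Sigma.ncard_preimage_fst_singleton, Nat.card_eq_fintype_card, Fintype.card_fin]

end Split

theorem ReachIn.subset_preimage_of_copyGraph {V : Type*} (G : SimpleGraph V) {m n : V → ℕ}
    {L : ℕ} {ψ : (Σ v, Fin (m v)) → Σ v, Fin (n v)} (hψ : ∀ x, (ψ x).1 = x.1)
    (c : (Σ v, Fin (n v)) → Fin L) (x : Σ v, Fin (m v)) :
    {u | ReachIn (copyGraph G m) {w | c (ψ w) = c (ψ x)} x u} ⊆
      ψ ⁻¹' {u | ReachIn (copyGraph G n) {w | c w = c (ψ x)} (ψ x) u} :=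
  fun _ hu => ReachIn.map (T := {w | c w = c (ψ x)}) (fun _ _ => copyGraph_adj_map G hψ) hu

theorem wxp_colorable_of_splitColorable {V : Type*} [Finite V] {G : SimpleGraph V} {Wt : V → ℕ}
    {L C : ℕ} (h : IsSplitColorable G Wt L C) :
    ∃ c : (Σ v : V, Fin (Wt v)) → Fin L,
      ∀ x, {u | ReachIn (copyGraph G Wt) {w | c w = c x} x u}.ncard ≤ C := by
  obtain ⟨m, -, W', -, hsum, c, hc⟩ := h
  set ψ := Sigma.fst ∘ splitEquiv hsum
  refine ⟨c ∘ ψ, fun x => ?_⟩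
  calc _ ≤ (ψ ⁻¹' {u | ReachIn (copyGraph G m) {w | c w = c (ψ x)} (ψ x) u}).ncard :=
        Set.ncard_le_ncard (ReachIn.subset_preimage_of_copyGraph G (splitEquiv_fst_fst hsum) c x)
    _ = _ := ncard_preimage_splitEquiv_fst hsum _
    _ ≤ C := hc (ψ x)

theorem splitColorable_of_wxp_colorable {V : Type*} {G : SimpleGraph V} {Wt : V → ℕ}
    (hWt : ∀ v, 0 < Wt v) {L C : ℕ} {c : (Σ v : V, Fin (Wt v)) → Fin L}
    (hc : ∀ x, {u | ReachIn (copyGraph G Wt) {w | c w = c x} x u}.ncard ≤ C) :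
    IsSplitColorable G Wt L C :=
  ⟨Wt, hWt, fun _ => 1, fun _ => one_pos, fun v => by simp, c, fun x => by
    simpa only [finsum_one] using hc x⟩

theorem splitColorable_iff_wxp_colorable_general {V : Type*} [Fintype V]
    (G : SimpleGraph V) (Wt : V → ℕ) (hWt : ∀ v, 0 < Wt v)
    (L C : ℕ) :
    IsSplitColorable G Wt L C ↔
      ∃ c : (Σ v : V, Fin (Wt v)) → Fin L,
        ∀ x, {u | ReachIn (copyGraph G Wt) {w | c w = c x} x u}.ncard ≤ C :=
  ⟨wxp_colorable_of_splitColorable, fun ⟨_, hc⟩ => splitColorable_of_wxp_colorable hWt hc⟩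

/-- a weighted graph `G` is `[λ,C]`-split colorable iff its
weight-expanded graph `WXP(G)` has an (unweighted) `[λ,C]`-coloring. -/
theorem splitColorable_iff_wxp_colorable {V : Type*} [Fintype V]
    (G : SimpleGraph V) (Wt : V → ℕ) (hWt : ∀ v, 0 < Wt v)
    (L C : ℕ) (hL : 0 < L) (hC : 0 < C) :
    IsSplitColorable G Wt L C ↔
      ∃ c : (Σ v : V, Fin (Wt v)) → Fin L,
        ∀ x, {u | ReachIn (copyGraph G Wt) {w | c w = c x} x u}.ncard ≤ C :=
  splitColorable_iff_wxp_colorable_general G Wt hWt L C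
end

section
/- Let G be a finite split graph with clique number ω and let C be a positive integer. Then G has a [⌈ω/C⌉ + 1, C]-partition. -/
/-- `G` is a split graph: its vertex set is the disjoint union of an independent
set and a clique. -/
def IsSplitGraph {V : Type*} (G : SimpleGraph V) : Prop :=
  ∃ S K : Set V, Disjoint S K ∧ S ∪ K = Set.univ ∧
    (∀ u ∈ S, ∀ v ∈ S, ¬ G.Adj u v) ∧ G.IsClique K

/-- The clique number of `G`. -/
noncomputable def cliqueNumber {V : Type*} (G : SimpleGraph V) : ℕ :=
  sSup {m | ∃ s : Finset V, G.IsNClique m s}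

/-!
Put every vertex of the independent set `S` in a part of its own and cut the clique `K` into
`⌈|K|/C⌉` arbitrary chunks of at most `C` vertices; each chunk is connected because `K` is a
clique. A clique of `G` meets at most one vertex of `S`, hence at most one singleton part, and at
most all `⌈|K|/C⌉ ≤ ⌈ω/C⌉` chunks.
-/

namespace SimpleGraph

variable {V : Type*} {G : SimpleGraph V}

theorem IsClique.connectedIn {K : Set V} (hK : G.IsClique K) : ConnectedIn G K := by
  intro u hu v hv
  obtain rfl | hne := eq_or_ne u v
  · exact .refl
  · exact .single ⟨hK hu hv hne, hu, hv⟩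

theorem IsClique.ncard_le_cliqueNumber [Finite V] {K : Set V} (hK : G.IsClique K) :
    K.ncard ≤ cliqueNumber G := by
  rw [Set.ncard_eq_toFinset_card K]
  exact IsClique.card_le_cliqueNum (tc := by simpa using hK)

theorem IsClique.ncard_singletons_meeting_le_one {S K : Set V}
    (hS : ∀ u ∈ S, ∀ v ∈ S, ¬ G.Adj u v) (hK : G.IsClique K) :
    {P ∈ (fun s => ({s} : Set V)) '' S | (P ∩ K).Nonempty}.ncard ≤ 1 := by
  have hsub : {P ∈ (fun s => ({s} : Set V)) '' S | (P ∩ K).Nonempty}.Subsingleton := by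
    rintro _ ⟨⟨u, huS, rfl⟩, huK⟩ _ ⟨⟨v, hvS, rfl⟩, hvK⟩
    rw [Set.singleton_inter_nonempty] at huK hvK
    by_contra hne
    exact hS u huS v hvS (hK huK hvK (ne_of_apply_ne _ hne))
  exact (Set.ncard_le_one hsub.finite).2 hsub

end SimpleGraph

theorem Set.Finite.exists_partition_ncard_le {V : Type*} {K : Set V} (hK : K.Finite) {C : ℕ}
    (hC : 0 < C) :
    ∃ Bs : Set (Set V), (∀ B ∈ Bs, B.Nonempty ∧ B.ncard ≤ C) ∧ Bs.PairwiseDisjoint id ∧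
      ⋃₀ Bs = K ∧ Bs.ncard ≤ (K.ncard + C - 1) / C := by
  induction hn : K.ncard using Nat.strong_induction_on generalizing K with
  | _ n ih =>
  by_cases hsmall : n ≤ C
  · obtain rfl | hne := K.eq_empty_or_nonempty
    · exact ⟨∅, by simp⟩
    have hpos : 0 < n := hn ▸ (Set.ncard_pos hK).2 hne
    refine ⟨{K}, by simpa [hn] using ⟨hne, hsmall⟩, Set.pairwiseDisjoint_singleton _ _,
      Set.sUnion_singleton K, ?_⟩
    rw [Set.ncard_singleton]
    exact (Nat.le_div_iff_mul_le hC).2 (by omega)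
  · obtain ⟨A, hAK, hA⟩ := Set.exists_subset_card_eq (show C ≤ K.ncard by omega)
    obtain ⟨Bs, hBs, hdisj, hcover, hcard⟩ := ih (n - C) (by omega) hK.sdiff
      (by rw [Set.ncard_sdiff hAK (hK.subset hAK), hn, hA])
    refine ⟨insert A Bs, ?_, ?_, ?_, ?_⟩
    · have hAne : A.Nonempty := (Set.ncard_pos (hK.subset hAK)).1 (hA ▸ hC)
      exact Set.forall_mem_insert.2 ⟨⟨hAne, hA.le⟩, hBs⟩
    · refine hdisj.insert fun B hB _ => ?_
      exact Set.disjoint_sdiff_right.mono_right (hcover ▸ Set.subset_sUnion_of_mem hB)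
    · rw [Set.sUnion_insert, hcover, Set.union_sdiff_cancel hAK]
    · have hceil : n + C - 1 = (n - C + C - 1) + C := by omega
      calc (insert A Bs).ncard ≤ Bs.ncard + 1 := Set.ncard_insert_le A Bs
        _ ≤ (n - C + C - 1) / C + 1 := by omega
        _ = (n + C - 1) / C := by rw [hceil, Nat.add_div_right _ hC]

theorem IsLCPartition.mono {V : Type*} {G : SimpleGraph V} {L L' C : ℕ} {Ps : Set (Set V)}
    (h : IsLCPartition G L C Ps) (hL : L ≤ L') : IsLCPartition G L' C Ps :=
  ⟨h.1, h.2.1, h.2.2.1, h.2.2.2.1, fun K hK => (h.2.2.2.2 K hK).trans hL⟩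

theorem isLCPartition_union_image_singleton {V : Type*} [Finite V] {G : SimpleGraph V}
    {S K : Set V} (hSK : Disjoint S K) (hcover : S ∪ K = Set.univ)
    (hS : ∀ u ∈ S, ∀ v ∈ S, ¬ G.Adj u v) (hK : G.IsClique K) {C : ℕ} (hC : 0 < C)
    {Bs : Set (Set V)} (hBs : ∀ B ∈ Bs, B.Nonempty ∧ B.ncard ≤ C)
    (hBdisj : Bs.PairwiseDisjoint id) (hBcover : ⋃₀ Bs = K) :
    IsLCPartition G (Bs.ncard + 1) C (Bs ∪ (fun s => {s}) '' S) := by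
  have hBK : ∀ B ∈ Bs, B ⊆ K := fun B hB => hBcover ▸ Set.subset_sUnion_of_mem hB
  refine ⟨?_, ?_, ?_, ?_, fun K' hK' => ?_⟩
  · rintro P (hP | ⟨s, -, rfl⟩)
    exacts [(hBs P hP).1, Set.singleton_nonempty s]
  · refine hBdisj.union ?_ ?_
    · exact Set.singleton_injective.injOn.pairwiseDisjoint_image.2 (by simp)
    · rintro B hB _ ⟨s, hs, rfl⟩ -
      exact Set.disjoint_singleton_right.2 fun hsB => hSK.notMem_of_mem_left hs (hBK B hB hsB)
  · rw [Set.sUnion_union, hBcover, Set.sUnion_image, ← hcover, Set.union_comm]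
    simp
  · rintro P (hP | ⟨s, -, rfl⟩)
    · exact ⟨(hK.subset (hBK P hP)).connectedIn, (hBs P hP).2⟩
    · exact ⟨(SimpleGraph.IsClique.of_subsingleton Set.subsingleton_singleton).connectedIn,
        by simpa using Nat.one_le_of_lt hC⟩
  · calc {P ∈ Bs ∪ (fun s => {s}) '' S | (P ∩ K').Nonempty}.ncard
        = ({P ∈ Bs | (P ∩ K').Nonempty} ∪
            {P ∈ (fun s => {s}) '' S | (P ∩ K').Nonempty}).ncard := by
          congr 1; exact Set.sep_union
      _ ≤ _ := Set.ncard_union_le _ _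
      _ ≤ Bs.ncard + 1 := add_le_add (Set.ncard_le_ncard (Set.sep_subset Bs _))
          (hK'.ncard_singletons_meeting_le_one hS)

/-- every finite split graph has a `[⌈ω/C⌉ + 1, C]`-partition
(the ceiling written with natural division). -/
theorem split_graph_partition {V : Type*} [Fintype V] (G : SimpleGraph V)
    (hsplit : IsSplitGraph G) (C : ℕ) (hC : 0 < C) :
    ∃ Ps : Set (Set V), IsLCPartition G ((cliqueNumber G + C - 1) / C + 1) C Ps := by
  obtain ⟨S, K, hSK, hcover, hS, hK⟩ := hsplit
  obtain ⟨Bs, hBs, hBdisj, hBcover, hBcard⟩ := K.toFinite.exists_partition_ncard_le hC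
  refine ⟨_, (isLCPartition_union_image_singleton hSK hcover hS hK hC hBs hBdisj hBcover).mono
    (Nat.add_le_add_right (hBcard.trans ?_) 1)⟩
  exact Nat.div_le_div_right
    (Nat.sub_le_sub_right (Nat.add_le_add_right hK.ncard_le_cliqueNumber C) 1)
end

section
/- Let n and m be positive integers, let E = {e₁,…,e_{2n}} be a set of 2n elements and let S₁,…,S_m be subsets of E. Construct the split graph G with vertex set {v₁,…,v_{2n}} ∪ {w₁,…,w_m}, where the vertices v₁,…,v_{2n} are pairwise adjacent, the vertices w₁,…,w_m are pairwise non-adjacent, and vᵢ is adjacent to w_j if and only if eᵢ ∉ S_j. Then E can be partitioned into n pairs such that every subset S_j contains both elements of at least one pair, if and only if G has an [n,2]-partition. -/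
/-- The split graph built from an instance of the set-partitioning problem: the
element-vertices `Sum.inl i` are pairwise adjacent, the subset-vertices
`Sum.inr j` are pairwise non-adjacent, and `Sum.inl i` is adjacent to `Sum.inr j`
iff element `i` does not belong to the subset `S j`. -/
def spGraph (N m : ℕ) (S : Fin m → Set (Fin N)) : SimpleGraph (Fin N ⊕ Fin m) where
  Adj a b :=
    (∃ i j : Fin N, a = Sum.inl i ∧ b = Sum.inl j ∧ i ≠ j) ∨
    (∃ (i : Fin N) (j : Fin m), a = Sum.inl i ∧ b = Sum.inr j ∧ i ∉ S j) ∨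
    (∃ (i : Fin N) (j : Fin m), a = Sum.inr j ∧ b = Sum.inl i ∧ i ∉ S j)
  symm := by
    refine ⟨?_⟩
    rintro a b (⟨i, j, rfl, rfl, h⟩ | ⟨i, j, rfl, rfl, h⟩ | ⟨i, j, rfl, rfl, h⟩)
    · exact Or.inl ⟨j, i, rfl, rfl, h.symm⟩
    · exact Or.inr (Or.inr ⟨i, j, rfl, rfl, h⟩)
    · exact Or.inr (Or.inl ⟨i, j, rfl, rfl, h⟩)
  loopless := by
    refine ⟨?_⟩
    rintro a (⟨i, j, rfl, h, hne⟩ | ⟨i, j, rfl, h, _⟩ | ⟨i, j, rfl, h, _⟩)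
    · exact hne (Sum.inl.inj h)
    · simp at h
    · simp at h


/-!
The element vertices form a clique, so in an `[n,2]`-partition they meet at most `n` parts of
size at most `2`; as there are `2n` of them, these parts are exactly `n` pairs of element
vertices. For each `j`, the vertex `w_j` together with the elements outside `S_j` is again a
clique, and it already meets the part of `w_j`, so it misses one of the `n` pairs, which then lies
inside `S_j`. Conversely, lifting a pairing to the element vertices and putting every `w_j` in a
part of its own gives an `[n,2]`-partition: a clique through `w_j` avoids the pair inside `S_j`.
-/

namespace Set

variable {α : Type*} [Finite α] {M : Set (Set α)} {c : ℕ}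

theorem ncard_sUnion_le_mul (h : ∀ P ∈ M, P.ncard ≤ c) :
    (⋃₀ M).ncard ≤ c * M.ncard := by
  have := Fintype.ofFinite M
  calc (⋃₀ M).ncard = (⋃ P : M, (P : Set α)).ncard := by rw [sUnion_eq_iUnion]
    _ ≤ ∑ P : M, (P : Set α).ncard := ncard_iUnion_le_of_fintype _
    _ ≤ Finset.univ.card • c := Finset.sum_le_card_nsmul _ _ _ fun P _ => h P P.2
    _ = c * M.ncard := by
      rw [smul_eq_mul, mul_comm, Finset.card_univ, ← Nat.card_eq_fintype_card,
        Nat.card_coe_set_eq]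

theorem ncard_sUnion_eq_mul (hd : M.PairwiseDisjoint id) (h : ∀ P ∈ M, P.ncard = c) :
    (⋃₀ M).ncard = c * M.ncard := by
  have := Fintype.ofFinite M
  calc (⋃₀ M).ncard = (⋃ P : M, (P : Set α)).ncard := by rw [sUnion_eq_iUnion]
    _ = ∑ P : M, (P : Set α).ncard := by
      rw [ncard_iUnion_of_finite (s := fun P : M => (P : Set α)) (fun _ => toFinite _)
        fun P Q hPQ => hd P.2 Q.2 (Subtype.coe_ne_coe.2 hPQ), finsum_eq_sum_of_fintype]
    _ = Finset.univ.card • c := Finset.sum_const_nat fun P _ => h P P.2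
    _ = c * M.ncard := by
      rw [smul_eq_mul, mul_comm, Finset.card_univ, ← Nat.card_eq_fintype_card,
        Nat.card_coe_set_eq]

theorem ncard_eq_of_mul_le_ncard_sUnion (h : ∀ P ∈ M, P.ncard ≤ c)
    (hM : c * M.ncard ≤ (⋃₀ M).ncard) : ∀ P ∈ M, P.ncard = c := by
  intro P hP
  have hsplit : ⋃₀ M ⊆ P ∪ ⋃₀ (M \ {P}) := by
    rintro x ⟨Q, hQ, hxQ⟩
    by_cases hQP : Q = P
    · exact Or.inl (hQP ▸ hxQ)
    · exact Or.inr ⟨Q, ⟨hQ, hQP⟩, hxQ⟩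
  have hrest := ncard_sUnion_le_mul (M := M \ {P}) fun Q hQ => h Q hQ.1
  rw [ncard_sdiff_singleton_of_mem hP, Nat.mul_sub_one] at hrest
  have hunion := (ncard_le_ncard hsplit).trans (ncard_union_le _ _)
  have hc : c ≤ c * M.ncard := Nat.le_mul_of_pos_right c ((ncard_pos (toFinite M)).2 ⟨P, hP⟩)
  have hP := h P hP
  omega

end Set

theorem SimpleGraph.IsClique.connectedIn_s18 {V : Type*} {G : SimpleGraph V} {P : Set V}
    (h : G.IsClique P) : ConnectedIn G P := by
  intro u hu v hv
  rcases eq_or_ne u v with rfl | huv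
  · exact .refl
  · exact .single ⟨h hu hv huv, hu, hv⟩

section spGraph

open Set

variable {N m : ℕ} {S : Fin m → Set (Fin N)}

@[simp]
theorem spGraph_adj_inl_inl {i i' : Fin N} :
    (spGraph N m S).Adj (Sum.inl i) (Sum.inl i') ↔ i ≠ i' := by
  simp [spGraph]

@[simp]
theorem spGraph_adj_inl_inr {i : Fin N} {j : Fin m} :
    (spGraph N m S).Adj (Sum.inl i) (Sum.inr j) ↔ i ∉ S j := by
  simp [spGraph]

@[simp]
theorem spGraph_adj_inr_inl {i : Fin N} {j : Fin m} :
    (spGraph N m S).Adj (Sum.inr j) (Sum.inl i) ↔ i ∉ S j := by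
  simp [spGraph]

@[simp]
theorem spGraph_not_adj_inr_inr {j j' : Fin m} :
    ¬(spGraph N m S).Adj (Sum.inr j) (Sum.inr j') := by
  simp [spGraph]

theorem spGraph_isClique_range_inl : (spGraph N m S).IsClique (range Sum.inl) := by
  rintro _ ⟨i, rfl⟩ _ ⟨i', rfl⟩ hne
  simpa using hne

theorem spGraph_isClique_insert_inr (j : Fin m) :
    (spGraph N m S).IsClique (insert (Sum.inr j) (Sum.inl '' (S j)ᶜ)) := by
  rintro _ (rfl | ⟨i, hi, rfl⟩) _ (rfl | ⟨i', hi', rfl⟩) hne <;> simp_all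

theorem spGraph_isClique_subset {K : Set (Fin N ⊕ Fin m)} (hK : (spGraph N m S).IsClique K) :
    K ⊆ range Sum.inl ∨ ∃ j, K ⊆ insert (Sum.inr j) (Sum.inl '' (S j)ᶜ) := by
  by_cases! hj : ∃ j, Sum.inr j ∈ K
  · obtain ⟨j, hj⟩ := hj
    refine Or.inr ⟨j, ?_⟩
    rintro (i | j') hx
    · exact Or.inr ⟨i, by simpa using hK hx hj (by simp), rfl⟩
    · by_contra hne
      exact spGraph_not_adj_inr_inr (hK hx hj (by simpa using hne))
  · refine Or.inl ?_
    rintro (i | j) hx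
    · exact ⟨i, rfl⟩
    · exact absurd hx (hj j)

end spGraph

section liftPartition

open Set

variable {N m : ℕ} {S : Fin m → Set (Fin N)}

def liftPartition (Ps : Set (Set (Fin N))) : Set (Set (Fin N ⊕ Fin m)) :=
  image Sum.inl '' Ps ∪ range fun j => {Sum.inr j}

theorem ncard_liftPartition_meeting_le {Ps : Set (Set (Fin N))}
    (hS : ∀ j, ∃ P ∈ Ps, P ⊆ S j) {K : Set (Fin N ⊕ Fin m)}
    (hK : (spGraph N m S).IsClique K) :
    {Q ∈ liftPartition Ps | (Q ∩ K).Nonempty}.ncard ≤ Ps.ncard := by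
  rcases spGraph_isClique_subset hK with hK | ⟨j, hK⟩
  · calc _ ≤ (image Sum.inl '' Ps).ncard := ncard_le_ncard ?_ (toFinite _)
      _ ≤ Ps.ncard := ncard_image_le (toFinite _)
    rintro Q ⟨⟨P, hP, rfl⟩ | ⟨j, rfl⟩, x, hxQ, hxK⟩
    · exact ⟨P, hP, rfl⟩
    · obtain ⟨i, rfl⟩ := hK hxK
      simp at hxQ
  · obtain ⟨P₀, hP₀, hP₀S⟩ := hS j
    calc _ ≤ (insert {Sum.inr j} (image Sum.inl '' (Ps \ {P₀}))).ncard :=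
          ncard_le_ncard ?_ (toFinite _)
      _ ≤ (image Sum.inl '' (Ps \ {P₀})).ncard + 1 := ncard_insert_le _ _
      _ ≤ (Ps \ {P₀}).ncard + 1 := by grw [ncard_image_le (toFinite _)]
      _ = Ps.ncard := ncard_sdiff_singleton_add_one hP₀
    rintro Q ⟨⟨P, hP, rfl⟩ | ⟨j', rfl⟩, x, hxQ, hxK⟩
    · obtain ⟨i, hiP, rfl⟩ := hxQ
      refine mem_insert_of_mem _ ⟨P, ⟨hP, ?_⟩, rfl⟩
      rintro rfl
      have : i ∉ S j := by simpa using hK hxK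
      exact this (hP₀S hiP)
    · obtain rfl := hxQ
      obtain rfl : j' = j := by simpa using hK hxK
      exact mem_insert _ _

theorem isLCPartition_liftPartition {n : ℕ} {S : Fin m → Set (Fin (2 * n))}
    {Ps : Set (Set (Fin (2 * n)))} (hne : ∀ P ∈ Ps, P.Nonempty)
    (hdisj : Ps.PairwiseDisjoint id) (hcov : ⋃₀ Ps = univ) (hcard : ∀ P ∈ Ps, P.ncard = 2)
    (hS : ∀ j, ∃ P ∈ Ps, P ⊆ S j) :
    IsLCPartition (spGraph (2 * n) m S) n 2 (liftPartition Ps) := by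
  have hPs : Ps.ncard = n := by
    have := ncard_sUnion_eq_mul hdisj hcard
    rw [hcov, ncard_univ, Nat.card_fin] at this
    omega
  refine ⟨?_, ?_, ?_, ?_, fun K hK => (ncard_liftPartition_meeting_le hS hK).trans hPs.le⟩
  · rintro _ (⟨P, hP, rfl⟩ | ⟨j, rfl⟩)
    · exact (hne P hP).image _
    · exact singleton_nonempty _
  · rintro _ (⟨P, hP, rfl⟩ | ⟨j, rfl⟩) _ (⟨P', hP', rfl⟩ | ⟨j', rfl⟩) hne
    · exact (disjoint_image_iff Sum.inl_injective).2 (hdisj hP hP' fun h => hne (h ▸ rfl))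
    · simp [Function.onFun, disjoint_left]
    · simp [Function.onFun]
    · simpa [Function.onFun] using hne
  · refine eq_univ_of_forall ?_
    rintro (i | j)
    · obtain ⟨P, hP, hi⟩ := hcov ▸ mem_univ i
      exact ⟨_, Or.inl ⟨P, hP, rfl⟩, mem_image_of_mem _ hi⟩
    · exact ⟨_, Or.inr ⟨j, rfl⟩, rfl⟩
  · rintro _ (⟨P, hP, rfl⟩ | ⟨j, rfl⟩)
    · refine ⟨(spGraph_isClique_range_inl.subset (image_subset_range _ _)).connectedIn_s18, ?_⟩
      rw [ncard_image_of_injective _ Sum.inl_injective, hcard P hP]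
    · exact ⟨(SimpleGraph.isClique_singleton _).connectedIn_s18, by simp⟩

end liftPartition

section elementParts

open Set

variable {m n : ℕ} {S : Fin m → Set (Fin (2 * n))} {Qs : Set (Set (Fin (2 * n) ⊕ Fin m))}

def elementParts {N : ℕ} (Qs : Set (Set (Fin N ⊕ Fin m))) : Set (Set (Fin N ⊕ Fin m)) :=
  {P ∈ Qs | (P ∩ range Sum.inl).Nonempty}

theorem IsLCPartition.ncard_elementParts_and_sUnion_and_ncard_eq_two
    (h : IsLCPartition (spGraph (2 * n) m S) n 2 Qs) :
    (elementParts Qs).ncard = n ∧ ⋃₀ elementParts Qs = range Sum.inl ∧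
      ∀ P ∈ elementParts Qs, P.ncard = 2 := by
  obtain ⟨-, -, hcov, hsmall, hclique⟩ := h
  have hle : (elementParts Qs).ncard ≤ n := hclique _ spGraph_isClique_range_inl
  have hsmall' : ∀ P ∈ elementParts Qs, P.ncard ≤ 2 := fun P hP => (hsmall P hP.1).2
  have hsub : range Sum.inl ⊆ ⋃₀ elementParts Qs := by
    rintro _ ⟨i, rfl⟩
    obtain ⟨P, hP, hiP⟩ := hcov ▸ mem_univ (Sum.inl i)
    exact ⟨P, ⟨hP, _, hiP, i, rfl⟩, hiP⟩
  have hrange : (range (Sum.inl : Fin (2 * n) → Fin (2 * n) ⊕ Fin m)).ncard = 2 * n := by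
    rw [← image_univ, ncard_image_of_injective _ Sum.inl_injective, ncard_univ, Nat.card_fin]
  have hunion := ncard_sUnion_le_mul hsmall'
  have heq : ⋃₀ elementParts Qs = range Sum.inl :=
    (eq_of_subset_of_ncard_le hsub (by omega)).symm
  rw [heq] at hunion
  exact ⟨by omega, heq, ncard_eq_of_mul_le_ncard_sUnion hsmall' (by rw [heq]; omega)⟩

theorem IsLCPartition.exists_elementParts_preimage_subset
    (h : IsLCPartition (spGraph (2 * n) m S) n 2 Qs) (j : Fin m) :
    ∃ P ∈ elementParts Qs, Sum.inl ⁻¹' P ⊆ S j := by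
  obtain ⟨hn, heq, -⟩ := h.ncard_elementParts_and_sUnion_and_ncard_eq_two
  obtain ⟨-, -, hcov, -, hclique⟩ := h
  by_contra! hj
  obtain ⟨Q, hQ, hjQ⟩ := hcov ▸ mem_univ (Sum.inr j)
  have hQ' : Q ∉ elementParts Qs := fun hQ' => by
    have : Sum.inr j ∈ ⋃₀ elementParts Qs := ⟨Q, hQ', hjQ⟩
    simp [heq] at this
  have hmeet : insert Q (elementParts Qs) ⊆
      {P ∈ Qs | (P ∩ insert (Sum.inr j) (Sum.inl '' (S j)ᶜ)).Nonempty} := by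
    rintro P (rfl | hP)
    · exact ⟨hQ, _, hjQ, mem_insert _ _⟩
    · obtain ⟨i, hiP, hiS⟩ := not_subset.1 (hj P hP)
      exact ⟨hP.1, _, hiP, mem_insert_of_mem _ ⟨i, hiS, rfl⟩⟩
  have := (ncard_le_ncard hmeet).trans (hclique _ (spGraph_isClique_insert_inr j))
  rw [ncard_insert_of_notMem hQ', hn] at this
  omega

theorem IsLCPartition.exists_pairing (h : IsLCPartition (spGraph (2 * n) m S) n 2 Qs) :
    ∃ Ps : Set (Set (Fin (2 * n))), (∀ P ∈ Ps, P.Nonempty) ∧ Ps.PairwiseDisjoint id ∧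
      ⋃₀ Ps = univ ∧ (∀ P ∈ Ps, P.ncard = 2) ∧ ∀ j, ∃ P ∈ Ps, P ⊆ S j := by
  obtain ⟨-, heq, hcard⟩ := h.ncard_elementParts_and_sUnion_and_ncard_eq_two
  have hsub : ∀ P ∈ elementParts Qs, P ⊆ range Sum.inl := fun P hP =>
    heq ▸ subset_sUnion_of_mem hP
  refine ⟨(Sum.inl ⁻¹' ·) '' elementParts Qs, ?_, ?_, ?_, ?_, fun j => ?_⟩
  · rintro _ ⟨P, ⟨-, _, hxP, i, rfl⟩, rfl⟩
    exact ⟨i, hxP⟩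
  · rintro _ ⟨P, hP, rfl⟩ _ ⟨P', hP', rfl⟩ hne
    exact (h.2.1 hP.1 hP'.1 fun hPP' => hne (hPP' ▸ rfl)).preimage _
  · rw [sUnion_image, ← preimage_iUnion₂, ← sUnion_eq_biUnion, heq, preimage_range]
  · rintro _ ⟨P, hP, rfl⟩
    rw [ncard_preimage_of_injective_subset_range Sum.inl_injective (hsub P hP), hcard P hP]
  · obtain ⟨P, hP, hPS⟩ := h.exists_elementParts_preimage_subset j
    exact ⟨_, ⟨P, hP, rfl⟩, hPS⟩

end elementParts

theorem sp_iff_cp_general (n m : ℕ)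
    (S : Fin m → Set (Fin (2 * n))) :
    (∃ Ps : Set (Set (Fin (2 * n))),
      (∀ P ∈ Ps, P.Nonempty) ∧ Ps.PairwiseDisjoint id ∧ ⋃₀ Ps = Set.univ ∧
      (∀ P ∈ Ps, P.ncard = 2) ∧ (∀ j : Fin m, ∃ P ∈ Ps, P ⊆ S j)) ↔
    (∃ Ps : Set (Set (Fin (2 * n) ⊕ Fin m)),
      IsLCPartition (spGraph (2 * n) m S) n 2 Ps) := by
  constructor
  · rintro ⟨Ps, hne, hdisj, hcov, hcard, hS⟩
    exact ⟨_, isLCPartition_liftPartition hne hdisj hcov hcard hS⟩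
  · rintro ⟨Qs, h⟩
    exact h.exists_pairing

/-- the `2n` elements can be partitioned into `n` pairs such that
every subset `S j` contains both elements of at least one pair, iff the
associated split graph has an `[n,2]`-partition. -/
theorem sp_iff_cp (n m : ℕ) (hn : 0 < n) (hm : 0 < m)
    (S : Fin m → Set (Fin (2 * n))) :
    (∃ Ps : Set (Set (Fin (2 * n))),
      (∀ P ∈ Ps, P.Nonempty) ∧ Ps.PairwiseDisjoint id ∧ ⋃₀ Ps = Set.univ ∧
      (∀ P ∈ Ps, P.ncard = 2) ∧ (∀ j : Fin m, ∃ P ∈ Ps, P ⊆ S j)) ↔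
    (∃ Ps : Set (Set (Fin (2 * n) ⊕ Fin m)),
      IsLCPartition (spGraph (2 * n) m S) n 2 Ps) :=
  sp_iff_cp_general n m S
end

section
/- Let φ be a CNF formula with Boolean variables x₁,…,x_p and clauses C₁,…,C_q, where each clause is a nonempty set of literals containing at most one literal of each variable. Construct the set of 4p elements {xᵢ, x′ᵢ, Tᵢ, Fᵢ : 1 ≤ i ≤ p} and the following collection of subsets: for each i, the four subsets {xᵢ, x′ᵢ, Tᵢ}, {xᵢ, x′ᵢ, Fᵢ}, {xᵢ, Tᵢ, Fᵢ}, {x′ᵢ, Tᵢ, Fᵢ}; and for each clause C_j, the subset that is the union over the literals of C_j of {xᵢ, Tᵢ} if the literal is the positive literal of variable xᵢ and of {x′ᵢ, Tᵢ} if it is the negated literal of variable xᵢ. Then φ is satisfiable if and only if the 4p elements can be partitioned into 2p pairs such that every one of the constructed subsets contains both elements of at least one pair. -/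
lemma pair_sub3' {α : Type*} {u v x y z : α} (huv : u ≠ v) (h : ({u, v} : Set α) ⊆ {x, y, z}) :
    ({u, v} : Set α) = {x, y} ∨ ({u, v} : Set α) = {x, z} ∨ ({u, v} : Set α) = {y, z} := by
  have hu : u ∈ ({x, y, z} : Set α) := h (Set.mem_insert _ _)
  have hv : v ∈ ({x, y, z} : Set α) := h (Set.mem_insert_of_mem _ rfl)
  simp only [Set.mem_insert_iff, Set.mem_singleton_iff] at hu hv
  rcases hu with rfl | rfl | rfl <;> rcases hv with rfl | rfl | rfl <;>
    first
      | exact absurd rfl huv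
      | exact Or.inl rfl
      | exact Or.inl (Set.pair_comm _ _)
      | exact Or.inr (Or.inl rfl)
      | exact Or.inr (Or.inl (Set.pair_comm _ _))
      | exact Or.inr (Or.inr rfl)
      | exact Or.inr (Or.inr (Set.pair_comm _ _))

/-- reduction from SAT to the set-partitioning problem.  A clause is
`Cl j : Fin p → Option Bool` (at most one literal per variable, `some true` the
positive and `some false` the negated literal), and each clause is nonempty.  The
`4p` elements are `(i, 0) = xᵢ`, `(i, 1) = x′ᵢ`, `(i, 2) = Tᵢ`, `(i, 3) = Fᵢ`.
The formula is satisfiable iff the elements can be partitioned into `2p` pairs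
such that each of the four type-1 subsets of every variable and the subset built
from every clause contains both elements of at least one pair. -/
theorem sat_iff_sp (p q : ℕ) (hp : 0 < p) (hq : 0 < q)
    (Cl : Fin q → Fin p → Option Bool) (hCl : ∀ j : Fin q, ∃ i : Fin p, Cl j i ≠ none) :
    (∃ a : Fin p → Bool, ∀ j : Fin q, ∃ i : Fin p, Cl j i = some (a i)) ↔
    (∃ Ps : Set (Set (Fin p × Fin 4)),
      (∀ P ∈ Ps, P.Nonempty) ∧ Ps.PairwiseDisjoint id ∧ ⋃₀ Ps = Set.univ ∧
      (∀ P ∈ Ps, P.ncard = 2) ∧ Ps.ncard = 2 * p ∧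
      (∀ i : Fin p,
        (∃ P ∈ Ps, P ⊆ ({(i, 0), (i, 1), (i, 2)} : Set (Fin p × Fin 4))) ∧
        (∃ P ∈ Ps, P ⊆ ({(i, 0), (i, 1), (i, 3)} : Set (Fin p × Fin 4))) ∧
        (∃ P ∈ Ps, P ⊆ ({(i, 0), (i, 2), (i, 3)} : Set (Fin p × Fin 4))) ∧
        (∃ P ∈ Ps, P ⊆ ({(i, 1), (i, 2), (i, 3)} : Set (Fin p × Fin 4)))) ∧
      (∀ j : Fin q, ∃ P ∈ Ps, P ⊆
        {e : Fin p × Fin 4 | ∃ (i : Fin p) (b : Bool), Cl j i = some b ∧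
          (e = (i, if b then 0 else 1) ∨ e = (i, 2))})) := by
  classical
  constructor
  · rintro ⟨a, ha⟩
    classical
    set f : Fin p × Bool → Set (Fin p × Fin 4) := fun z =>
      {(z.1, if z.2 then (if a z.1 then 0 else 1) else (if a z.1 then 1 else 0)),
       (z.1, if z.2 then 2 else 3)} with hfdef
    have hmem : ∀ (i : Fin p) (s : Bool) (e : Fin p × Fin 4), e ∈ f (i, s) ↔
        (e = (i, if s then (if a i then 0 else 1) else (if a i then 1 else 0)) ∨
          e = (i, if s then 2 else 3)) := by
      intro i s e; rw [hfdef]; exact Set.mem_insert_iff.trans (by rw [Set.mem_singleton_iff])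
    have hdisj : ∀ (i i' : Fin p) (s s' : Bool), (i, s) ≠ (i', s') →
        Disjoint (f (i, s)) (f (i', s')) := by
      intro i i' s s' hne
      rw [Set.disjoint_left]
      intro e he he'
      rw [hmem] at he he'
      rcases he with rfl | rfl <;> rcases he' with he' | he' <;>
        rw [Prod.mk.injEq] at he' <;> obtain ⟨rfl, hc⟩ := he' <;>
        cases s <;> cases s' <;>
        first
          | exact hne rfl
          | (cases hai : a i <;> rw [hai] at hc <;> exact absurd hc (by decide))
          | exact absurd hc (by decide)
          | (cases hai : a i' <;> rw [hai] at hc <;> exact absurd hc (by decide))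
    have hinj : Function.Injective f := by
      rintro ⟨i, s⟩ ⟨i', s'⟩ h
      by_contra hne
      have hd := Set.disjoint_left.mp (hdisj i i' s s' hne)
      have hx : (i, if s then (2 : Fin 4) else 3) ∈ f (i, s) := (hmem i s _).mpr (Or.inr rfl)
      exact hd hx (h ▸ hx)
    refine ⟨Set.range f, ?_, ?_, ?_, ?_, ?_, ?_, ?_⟩
    · rintro P ⟨⟨i, s⟩, rfl⟩
      exact ⟨_, (hmem i s _).mpr (Or.inr rfl)⟩
    · rintro P ⟨⟨i, s⟩, rfl⟩ Q ⟨⟨i', s'⟩, rfl⟩ hne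
      exact hdisj i i' s s' (fun h => hne (by rw [h]))
    · ext ⟨i, k⟩
      simp only [Set.mem_sUnion, Set.mem_range, Set.mem_univ, iff_true]
      fin_cases k
      · cases hai : a i
        · exact ⟨f (i, false), ⟨(i, false), rfl⟩, (hmem i false _).mpr (Or.inl (by simp [hai]))⟩
        · exact ⟨f (i, true), ⟨(i, true), rfl⟩, (hmem i true _).mpr (Or.inl (by simp [hai]))⟩
      · cases hai : a i
        · exact ⟨f (i, true), ⟨(i, true), rfl⟩, (hmem i true _).mpr (Or.inl (by simp [hai]))⟩
        · exact ⟨f (i, false), ⟨(i, false), rfl⟩, (hmem i false _).mpr (Or.inl (by simp [hai]))⟩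
      · exact ⟨f (i, true), ⟨(i, true), rfl⟩, (hmem i true _).mpr (Or.inr rfl)⟩
      · exact ⟨f (i, false), ⟨(i, false), rfl⟩, (hmem i false _).mpr (Or.inr rfl)⟩
    · rintro P ⟨⟨i, s⟩, rfl⟩
      refine Set.ncard_pair ?_
      cases s <;> cases hai : a i <;> simp [hai, Prod.ext_iff]
    · rw [← Set.image_univ, Set.ncard_image_of_injective _ hinj, Set.ncard_univ,
        Nat.card_eq_fintype_card]
      simp [mul_comm]
    · intro i
      refine ⟨⟨f (i, true), ⟨(i, true), rfl⟩, ?_⟩, ⟨f (i, false), ⟨(i, false), rfl⟩, ?_⟩,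
        ⟨f (i, if a i then true else false), ⟨_, rfl⟩, ?_⟩,
        ⟨f (i, if a i then false else true), ⟨_, rfl⟩, ?_⟩⟩ <;>
      · intro e he
        rw [hmem] at he
        revert he
        cases hai : a i <;> intro he <;> rcases he with rfl | rfl <;> simp
    · intro j
      obtain ⟨i, hi⟩ := ha j
      refine ⟨f (i, true), ⟨(i, true), rfl⟩, ?_⟩
      intro e he
      rw [hmem] at he
      rcases he with rfl | rfl
      · exact ⟨i, a i, hi, Or.inl (by cases a i <;> rfl)⟩
      · exact ⟨i, a i, hi, Or.inr rfl⟩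
  · rintro ⟨Ps, hne, hdisj, hcov, hcard2, hcardPs, htype1, hclause⟩
    classical
    have huniq : ∀ P ∈ Ps, ∀ Q ∈ Ps, ∀ e : Fin p × Fin 4, e ∈ P → e ∈ Q → P = Q := by
      intro P hP Q hQ e heP heQ
      by_contra h
      exact Set.disjoint_left.mp (hdisj hP hQ h) heP heQ
    have KL : ∀ i : Fin p,
        (({(i,0),(i,2)} : Set (Fin p × Fin 4)) ∈ Ps ∧ ({(i,1),(i,3)} : Set (Fin p × Fin 4)) ∈ Ps) ∨
        (({(i,1),(i,2)} : Set (Fin p × Fin 4)) ∈ Ps ∧ ({(i,0),(i,3)} : Set (Fin p × Fin 4)) ∈ Ps) ∨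
        (({(i,2),(i,3)} : Set (Fin p × Fin 4)) ∈ Ps ∧ ({(i,0),(i,1)} : Set (Fin p × Fin 4)) ∈ Ps) := by
      intro i
      obtain ⟨⟨P1, hP1, hP1s⟩, -, ⟨P3, hP3, hP3s⟩, ⟨P4, hP4, hP4s⟩⟩ := htype1 i
      obtain ⟨u, v, huv, rfl⟩ := Set.ncard_eq_two.mp (hcard2 _ hP3)
      obtain ⟨u', v', huv', rfl⟩ := Set.ncard_eq_two.mp (hcard2 _ hP4)
      rcases pair_sub3' huv hP3s with h3 | h3 | h3 <;> rw [h3] at hP3 <;>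
        rcases pair_sub3' huv' hP4s with h4 | h4 | h4 <;> rw [h4] at hP4 <;>
        first
          | exact Or.inl ⟨hP3, hP4⟩
          | exact Or.inr (Or.inl ⟨hP4, hP3⟩)
          | (exfalso
             first
               | (refine absurd (huniq _ hP3 _ hP4 (i, 2) ?_ ?_) ?_ <;>
                    (simp [Set.pair_eq_pair_iff, Prod.ext_iff]; done))
               | (refine absurd (huniq _ hP3 _ hP4 (i, 3) ?_ ?_) ?_ <;>
                    (simp [Set.pair_eq_pair_iff, Prod.ext_iff]; done)))
          | (obtain ⟨u1, v1, huv1, rfl⟩ := Set.ncard_eq_two.mp (hcard2 _ hP1)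
             rcases pair_sub3' huv1 hP1s with h1 | h1 | h1 <;> rw [h1] at hP1 <;>
               first
                 | exact Or.inr (Or.inr ⟨hP3, hP1⟩)
                 | (exfalso
                    refine absurd (huniq _ hP1 _ hP3 (i, 2) ?_ ?_) ?_ <;>
                      (simp [Set.pair_eq_pair_iff, Prod.ext_iff]; done)))
    set a : Fin p → Bool := fun i =>
      if ({(i,0),(i,2)} : Set (Fin p × Fin 4)) ∈ Ps then true else false with hadef
    have ha_true : ∀ i : Fin p, ({(i,0),(i,2)} : Set (Fin p × Fin 4)) ∈ Ps → a i = true :=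
      fun i h => if_pos h
    have ha_false : ∀ i : Fin p, ({(i,1),(i,2)} : Set (Fin p × Fin 4)) ∈ Ps → a i = false := by
      intro i h
      refine if_neg (fun h0 => ?_)
      have heq := huniq _ h0 _ h (i, 2) (by simp) (by simp)
      rw [Set.pair_eq_pair_iff] at heq
      simp [Prod.ext_iff] at heq
    refine ⟨a, fun j => ?_⟩
    obtain ⟨P, hP, hPs⟩ := hclause j
    obtain ⟨e, heP⟩ := hne P hP
    have other : ∀ S ∈ Ps, e ∈ S → ∀ x ∈ S,
        ∃ (i' : Fin p) (b' : Bool), Cl j i' = some b' ∧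
          (x = (i', if b' then 0 else 1) ∨ x = (i', 2)) := by
      intro S hS heS x hx
      exact hPs (by rw [huniq P hP S hS e heP heS]; exact hx)
    obtain ⟨i, b, hib, hor⟩ := hPs heP
    rcases hor with rfl | rfl
    · cases b
      · -- e = (i, 1), Cl j i = some false
        rcases KL i with ⟨hA, hB⟩ | ⟨hA, hB⟩ | ⟨hA, hB⟩
        · -- pair of (i,1) is {(i,1),(i,3)}; (i,3) in clause set: contradiction
          obtain ⟨i', b', hib', h | h⟩ := other _ hB (by simp) (i, 3) (by simp) <;>
            cases b' <;> simp [Prod.ext_iff] at h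
        · exact ⟨i, by rw [ha_false i hA]; exact hib⟩
        · obtain ⟨i', b', hib', h | h⟩ := other _ hB (by simp) (i, 0) (by simp) <;>
            cases b' <;> simp [Prod.ext_iff] at h
          obtain rfl := h
          rw [hib] at hib'
          exact absurd hib' (by simp)
      · -- e = (i, 0), Cl j i = some true
        rcases KL i with ⟨hA, hB⟩ | ⟨hA, hB⟩ | ⟨hA, hB⟩
        · exact ⟨i, by rw [ha_true i hA]; exact hib⟩
        · obtain ⟨i', b', hib', h | h⟩ := other _ hB (by simp) (i, 3) (by simp) <;>
            cases b' <;> simp [Prod.ext_iff] at h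
        · obtain ⟨i', b', hib', h | h⟩ := other _ hB (by simp) (i, 1) (by simp) <;>
            cases b' <;> simp [Prod.ext_iff] at h
          obtain rfl := h
          rw [hib] at hib'
          exact absurd hib' (by simp)
    · -- e = (i, 2)
      rcases KL i with ⟨hA, hB⟩ | ⟨hA, hB⟩ | ⟨hA, hB⟩
      · obtain ⟨i', b', hib', h | h⟩ := other _ hA (by simp) (i, 0) (by simp) <;>
          cases b' <;> simp [Prod.ext_iff] at h
        obtain rfl := h
        exact ⟨i, by rw [ha_true i hA]; exact hib'⟩
      · obtain ⟨i', b', hib', h | h⟩ := other _ hA (by simp) (i, 1) (by simp) <;>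
          cases b' <;> simp [Prod.ext_iff] at h
        obtain rfl := h
        exact ⟨i, by rw [ha_false i hA]; exact hib'⟩
      · obtain ⟨i', b', hib', h | h⟩ := other _ hA (by simp) (i, 3) (by simp) <;>
          cases b' <;> simp [Prod.ext_iff] at h
end
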